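/- arXiv:1212.6345 — 3 statements merged into one kernel-verified Lean document; each statement's English description precedes it below -/
import Mathlib

section
/- Let W be a module over a commutative ring with identity. Let n, n' ≥ 1, X ∈ W^{n×n}, X' ∈ W^{n'×n'}, and set L = lcm(n, n'), M = L/n, M' = L/n', d = gcd(n, n'). Then ⊕_{α=1}^{M} X = ⊕_{β=1}^{M'} X' (an equality of L×L matrices over W) if and only if there exists Y ∈ W^{d×d} such that X = ⊕_{α=1}^{n/d} Y and X' = ⊕_{β=1}^{n'/d} Y. (For W an operator space this says: ‖⊕_{α=1}^{M} X − ⊕_{β=1}^{M'} X'‖ = 0 if and only if X and X' are direct sums of repeated copies of a common matrix Y.) -/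
open Matrix

/-- The block-diagonal matrix with `k` diagonal blocks equal to `A` (each of size `p`). -/
def repDiag {α : Type*} [Zero α] {p : ℕ} (k : ℕ) (A : Matrix (Fin p) (Fin p) α) :
    Matrix (Fin (k * p)) (Fin (k * p)) α :=
  Matrix.of fun a b =>
    if ((finProdFinEquiv.symm a : Fin k × Fin p)).1 =
        ((finProdFinEquiv.symm b : Fin k × Fin p)).1 then
      A ((finProdFinEquiv.symm a : Fin k × Fin p)).2
        ((finProdFinEquiv.symm b : Fin k × Fin p)).2
    else 0

/-- Transport of a square matrix along an equality of sizes. -/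
def castMat {α : Type*} {a b : ℕ} (h : a = b) (X : Matrix (Fin a) (Fin a) α) :
    Matrix (Fin b) (Fin b) α :=
  (Matrix.reindex (finCongr h) (finCongr h)) X

lemma castMat_repDiag_apply {α : Type*} [Zero α] {p k m : ℕ} (hp : 0 < p) (h : k * p = m)
    (A : Matrix (Fin p) (Fin p) α) (i j : Fin m) :
    castMat h (repDiag k A) i j =
      if (i : ℕ) / p = (j : ℕ) / p then
        A ⟨i % p, Nat.mod_lt _ hp⟩ ⟨j % p, Nat.mod_lt _ hp⟩ else 0 := by
  subst h
  simp only [castMat, finCongr_refl, Matrix.reindex_apply, Equiv.refl_symm,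
    Matrix.submatrix_apply, Equiv.refl_apply, repDiag, Matrix.of_apply,
    finProdFinEquiv_symm_apply]
  congr 1
  · rw [eq_iff_iff, Fin.ext_iff, Fin.coe_divNat, Fin.coe_divNat]


lemma shift_iter {W : Type*} [Zero W] {Z : ℕ → ℕ → W} {c : ℕ}
    (h : ∀ i j, Z (i + c) (j + c) = Z i j) (q : ℕ) :
    ∀ i j, Z (i + q * c) (j + q * c) = Z i j := by
  induction q with
  | zero => simp
  | succ q ih =>
    intro i j
    have h1 : i + (q + 1) * c = i + q * c + c := by ring
    have h2 : j + (q + 1) * c = j + q * c + c := by ring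
    rw [h1, h2, h (i + q * c) (j + q * c), ih]

lemma shift_gcd {W : Type*} [Zero W] {Z : ℕ → ℕ → W} (m k : ℕ)
    (hm : ∀ i j, Z (i + m) (j + m) = Z i j) (hk : ∀ i j, Z (i + k) (j + k) = Z i j) :
    ∀ i j, Z (i + Nat.gcd m k) (j + Nat.gcd m k) = Z i j := by
  induction m, k using Nat.gcd.induction with
  | H0 k => simpa using hk
  | H1 m k hmpos ih =>
    rw [Nat.gcd_rec]
    refine ih ?_ hm
    intro i j
    have h1 := shift_iter hm (k / m) (i + k % m) (j + k % m)
    have e1 : i + k % m + k / m * m = i + k := by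
      rw [Nat.add_assoc, Nat.mod_add_div']
    have e2 : j + k % m + k / m * m = j + k := by
      rw [Nat.add_assoc, Nat.mod_add_div']
    rw [e1, e2, hk] at h1
    exact h1.symm

lemma aux_arith1 {n n' L d a b r1 r2 P1 P2 S P : ℕ}
    (hadm : P1 + r1 = a) (hbdm : P2 + r2 = b)
    (hr1 : r1 < d) (hr2 : r2 < d)
    (h1 : P1 + S + d = L)
    (h5 : P2 + d ≤ n)
    (h6 : P1 + d ≤ P2)
    (hMn : P + n' = L)
    (hdlen' : d ≤ n')
    (hsum : n + n' ≤ L + d) :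
    a + S < L ∧ P ≤ a + S ∧ a + S < P + n' ∧ L ≤ b + S := by omega

lemma aux_arith2 {n n' L d a b r1 r2 P1 P2 S P B : ℕ}
    (hadm : P1 + r1 = a) (hbdm : P2 + r2 = b)
    (hr1 : r1 < d) (hr2 : r2 < d)
    (h1 : P1 + S + d = L)
    (h5 : P2 + d ≤ n)
    (h6 : P1 + d ≤ P2)
    (hMn : P + n' = L)
    (hdlen' : d ≤ n')
    (hsum : n + n' ≤ L + d)
    (hBe : b + S = L + B) :
    B + n' < L ∧ B < P := by omega

lemma key_main {W : Type*} [Zero W] {n n' : ℕ} (hn : 0 < n) (hn' : 0 < n')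
    (f f' : ℕ → ℕ → W)
    (hf : ∀ i j, f (i % n) (j % n) = f i j)
    (hf' : ∀ i j, f' (i % n') (j % n') = f' i j)
    (H : ∀ i j, i < Nat.lcm n n' → j < Nat.lcm n n' →
      (if i / n = j / n then f i j else 0) = (if i / n' = j / n' then f' i j else 0))
    {i j : ℕ} (hi : i < n) (hj : j < n) :
    f i j = if i / Nat.gcd n n' = j / Nat.gcd n n'
            then f (i % Nat.gcd n n') (j % Nat.gcd n n') else 0 := by
  set d := Nat.gcd n n' with hd
  set L := Nat.lcm n n' with hL
  have hdpos : 0 < d := Nat.gcd_pos_of_pos_left _ hn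
  have hLpos : 0 < L := Nat.lcm_pos hn hn'
  have hdn : d ∣ n := Nat.gcd_dvd_left n n'
  have hdn' : d ∣ n' := Nat.gcd_dvd_right n n'
  have hnL : n ∣ L := Nat.dvd_lcm_left n n'
  have hn'L : n' ∣ L := Nat.dvd_lcm_right n n'
  have hdL : d ∣ L := hdn.trans hnL
  have hdlen : d ≤ n := Nat.le_of_dvd hn hdn
  have hdlen' : d ≤ n' := Nat.le_of_dvd hn' hdn'
  have hnleL : n ≤ L := Nat.le_of_dvd hLpos hnL
  have hn'leL : n' ≤ L := Nat.le_of_dvd hLpos hn'L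
  have hprod : d * L = n * n' := Nat.gcd_mul_lcm n n'
  have hsum : n + n' ≤ L + d := by
    obtain ⟨a, ha⟩ : ∃ a, n = d + a := ⟨n - d, by omega⟩
    obtain ⟨b, hb⟩ : ∃ b, n' = d + b := ⟨n' - d, by omega⟩
    have h2 : d * (d + (a + b)) ≤ d * L := by nlinarith [hprod]
    have h3 := Nat.le_of_mul_le_mul_left h2 hdpos
    omega
  set M := L / n with hM
  set M' := L / n' with hM'
  have hLM : M * n = L := Nat.div_mul_cancel hnL
  have hLM' : M' * n' = L := Nat.div_mul_cancel hn'L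
  have hM'pos : 0 < M' := Nat.div_pos hn'leL hn'
  obtain ⟨M'', hM''⟩ : ∃ M'', M' = M'' + 1 := ⟨M' - 1, by omega⟩
  set Z : ℕ → ℕ → W := fun i j => if (i / n) % M = (j / n) % M then f i j else 0 with hZdef
  set Z' : ℕ → ℕ → W := fun i j => if (i / n') % M' = (j / n') % M' then f' i j else 0 with hZ'def
  -- L-periodicity of Z in each argument
  have ZL1 : ∀ i j, Z (i + L) j = Z i j := by
    intro i j
    have e1 : (i + L) / n = i / n + M := by
      rw [← hLM]; exact Nat.add_mul_div_right i M hn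
    have e2 : (i + L) % n = i % n := by
      rw [← hLM]; exact Nat.add_mul_mod_self_right _ _ _
    have e3 : f (i + L) j = f i j := by rw [← hf (i + L) j, e2, hf]
    simp only [hZdef, e1, Nat.add_mod_right, e3]
  have ZL2 : ∀ i j, Z i (j + L) = Z i j := by
    intro i j
    have e1 : (j + L) / n = j / n + M := by
      rw [← hLM]; exact Nat.add_mul_div_right j M hn
    have e2 : (j + L) % n = j % n := by
      rw [← hLM]; exact Nat.add_mul_mod_self_right _ _ _
    have e3 : f i (j + L) = f i j := by rw [← hf i (j + L), e2, hf]
    simp only [hZdef, e1, Nat.add_mod_right, e3]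
  have ZL1' : ∀ q i j, Z (i + q * L) j = Z i j := by
    intro q
    induction q with
    | zero => simp
    | succ q ih =>
      intro i j
      have e : i + (q + 1) * L = i + q * L + L := by ring
      rw [e, ZL1, ih]
  have ZL2' : ∀ q i j, Z i (j + q * L) = Z i j := by
    intro q
    induction q with
    | zero => simp
    | succ q ih =>
      intro i j
      have e : j + (q + 1) * L = j + q * L + L := by ring
      rw [e, ZL2, ih]
  have Zmod : ∀ i j, Z i j = Z (i % L) (j % L) := by
    intro i j
    conv_lhs => rw [← Nat.mod_add_div' i L, ← Nat.mod_add_div' j L]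
    rw [ZL1' (i / L), ZL2' (j / L)]
  -- same for Z'
  have Z'L1 : ∀ i j, Z' (i + L) j = Z' i j := by
    intro i j
    have e1 : (i + L) / n' = i / n' + M' := by
      rw [← hLM']; exact Nat.add_mul_div_right i M' hn'
    have e2 : (i + L) % n' = i % n' := by
      rw [← hLM']; exact Nat.add_mul_mod_self_right _ _ _
    have e3 : f' (i + L) j = f' i j := by rw [← hf' (i + L) j, e2, hf']
    simp only [hZ'def, e1, Nat.add_mod_right, e3]
  have Z'L2 : ∀ i j, Z' i (j + L) = Z' i j := by
    intro i j
    have e1 : (j + L) / n' = j / n' + M' := by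
      rw [← hLM']; exact Nat.add_mul_div_right j M' hn'
    have e2 : (j + L) % n' = j % n' := by
      rw [← hLM']; exact Nat.add_mul_mod_self_right _ _ _
    have e3 : f' i (j + L) = f' i j := by rw [← hf' i (j + L), e2, hf']
    simp only [hZ'def, e1, Nat.add_mod_right, e3]
  have Z'L1' : ∀ q i j, Z' (i + q * L) j = Z' i j := by
    intro q
    induction q with
    | zero => simp
    | succ q ih =>
      intro i j
      have e : i + (q + 1) * L = i + q * L + L := by ring
      rw [e, Z'L1, ih]
  have Z'L2' : ∀ q i j, Z' i (j + q * L) = Z' i j := by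
    intro q
    induction q with
    | zero => simp
    | succ q ih =>
      intro i j
      have e : j + (q + 1) * L = j + q * L + L := by ring
      rw [e, Z'L2, ih]
  have Z'mod : ∀ i j, Z' i j = Z' (i % L) (j % L) := by
    intro i j
    conv_lhs => rw [← Nat.mod_add_div' i L, ← Nat.mod_add_div' j L]
    rw [Z'L1' (i / L), Z'L2' (j / L)]
  -- Z = Z'
  have hdivM : ∀ a, a < L → a / n % M = a / n := by
    intro a ha
    exact Nat.mod_eq_of_lt ((Nat.div_lt_iff_lt_mul hn).2 (by rw [hLM]; exact ha))
  have hdivM' : ∀ a, a < L → a / n' % M' = a / n' := by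
    intro a ha
    exact Nat.mod_eq_of_lt ((Nat.div_lt_iff_lt_mul hn').2 (by rw [hLM']; exact ha))
  have ZeqZ' : ∀ i j, Z i j = Z' i j := by
    intro i j
    rw [Zmod i j, Z'mod i j]
    have hiL : i % L < L := Nat.mod_lt _ hLpos
    have hjL : j % L < L := Nat.mod_lt _ hLpos
    simp only [hZdef, hZ'def, hdivM _ hiL, hdivM _ hjL, hdivM' _ hiL, hdivM' _ hjL]
    exact H _ _ hiL hjL
  -- shift invariance by n and n'
  have Zn : ∀ i j, Z (i + n) (j + n) = Z i j := by
    intro i j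
    have e1 : (i + n) / n = i / n + 1 := Nat.add_div_right i hn
    have e2 : (j + n) / n = j / n + 1 := Nat.add_div_right j hn
    have e3 : f (i + n) (j + n) = f i j := by
      rw [← hf (i + n) (j + n), Nat.add_mod_right, Nat.add_mod_right, hf]
    simp only [hZdef, e1, e2, e3]
    congr 1
    rw [eq_iff_iff]
    exact ⟨fun h => Nat.ModEq.add_right_cancel' 1 h, fun h => Nat.ModEq.add_right 1 h⟩
  have Z'n' : ∀ i j, Z' (i + n') (j + n') = Z' i j := by
    intro i j
    have e1 : (i + n') / n' = i / n' + 1 := Nat.add_div_right i hn'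
    have e2 : (j + n') / n' = j / n' + 1 := Nat.add_div_right j hn'
    have e3 : f' (i + n') (j + n') = f' i j := by
      rw [← hf' (i + n') (j + n'), Nat.add_mod_right, Nat.add_mod_right, hf']
    simp only [hZ'def, e1, e2, e3]
    congr 1
    rw [eq_iff_iff]
    exact ⟨fun h => Nat.ModEq.add_right_cancel' 1 h, fun h => Nat.ModEq.add_right 1 h⟩
  have Zn' : ∀ i j, Z (i + n') (j + n') = Z i j := by
    intro i j
    rw [ZeqZ', ZeqZ', Z'n']
  have Zd : ∀ i j, Z (i + d) (j + d) = Z i j := by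
    rw [hd]; exact shift_gcd n n' Zn Zn'
  have Ztd : ∀ q i j, Z (i + q * d) (j + q * d) = Z i j := fun q => shift_iter Zd q
  have Zlow : ∀ a b, a < n → b < n → Z a b = f a b := by
    intro a b ha hb
    simp [hZdef, Nat.div_eq_of_lt ha, Nat.div_eq_of_lt hb]
  -- the zero part
  have aux : ∀ a b, a < n → b < n → a / d < b / d → Z a b = 0 ∧ Z b a = 0 := by
    intro a b ha hb hab
    have hq2n : b / d < n / d := Nat.div_lt_div_of_lt_of_dvd hdn hb
    have hndLd : n / d ≤ L / d := Nat.div_le_div_right hnleL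
    obtain ⟨k, hk⟩ : ∃ k, a / d + k + 1 = L / d := ⟨L / d - 1 - a / d, by omega⟩
    have hLd : L / d * d = L := Nat.div_mul_cancel hdL
    have hnd : n / d * d = n := Nat.div_mul_cancel hdn
    have hadm : a / d * d + a % d = a := Nat.div_add_mod' a d
    have hbdm : b / d * d + b % d = b := Nat.div_add_mod' b d
    have hr1 : a % d < d := Nat.mod_lt _ hdpos
    have hr2 : b % d < d := Nat.mod_lt _ hdpos
    have h1 : a / d * d + k * d + d = L := by rw [← hLd, ← hk]; ring
    have h5 : b / d * d + d ≤ n := by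
      calc b / d * d + d = (b / d + 1) * d := by ring
        _ ≤ n / d * d := Nat.mul_le_mul_right d hq2n
        _ = n := hnd
    have h6 : a / d * d + d ≤ b / d * d := by
      calc a / d * d + d = (a / d + 1) * d := by ring
        _ ≤ b / d * d := Nat.mul_le_mul_right d hab
    have hMn : M'' * n' + n' = L := by rw [← hLM', hM'']; ring
    have ar1 := aux_arith1 hadm hbdm hr1 hr2 h1 h5 h6 hMn hdlen' hsum
    have hA_lt : a + k * d < L := ar1.1
    have hAdiv : (a + k * d) / n' = M'' := by
      refine Nat.div_eq_of_lt_le ar1.2.1 ?_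
      have hexp : (M'' + 1) * n' = M'' * n' + n' := by ring
      rw [hexp]; exact ar1.2.2.1
    have hBge : L ≤ b + k * d := ar1.2.2.2
    obtain ⟨B, hBe⟩ : ∃ B, b + k * d = L + B := ⟨b + k * d - L, (Nat.add_sub_cancel' hBge).symm⟩
    have ar2 := aux_arith2 hadm hbdm hr1 hr2 h1 h5 h6 hMn hdlen' hsum hBe
    have hBn' : B + n' < L := ar2.1
    have hBlt : B < L := by omega
    have hBdiv : B / n' < M'' := (Nat.div_lt_iff_lt_mul hn').2 (by
      have : B < M'' * n' := ar2.2
      exact lt_of_lt_of_le this (le_refl _))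
    have hAmod : (a + k * d) / n' % M' = M'' := by
      rw [hAdiv]; exact Nat.mod_eq_of_lt (by omega)
    have hBmod : B / n' % M' = B / n' := Nat.mod_eq_of_lt (by omega)
    have hne1 : ¬ ((a + k * d) / n' % M' = B / n' % M') := by
      rw [hAmod, hBmod]; omega
    have hne2 : ¬ (B / n' % M' = (a + k * d) / n' % M') := by
      rw [hAmod, hBmod]; omega
    have eA : (a + k * d) % L = a + k * d := Nat.mod_eq_of_lt hA_lt
    have eB : (L + B) % L = B := by rw [Nat.add_mod_left]; exact Nat.mod_eq_of_lt hBlt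
    constructor
    · calc Z a b = Z (a + k * d) (b + k * d) := (Ztd k a b).symm
        _ = Z (a + k * d) (L + B) := by rw [hBe]
        _ = Z ((a + k * d) % L) ((L + B) % L) := Zmod _ _
        _ = Z (a + k * d) B := by rw [eA, eB]
        _ = Z' (a + k * d) B := ZeqZ' _ _
        _ = 0 := by simp only [hZ'def]; exact if_neg hne1
    · calc Z b a = Z (b + k * d) (a + k * d) := (Ztd k b a).symm
        _ = Z (L + B) (a + k * d) := by rw [hBe]
        _ = Z ((L + B) % L) ((a + k * d) % L) := Zmod _ _
        _ = Z B (a + k * d) := by rw [eA, eB]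
        _ = Z' B (a + k * d) := ZeqZ' _ _
        _ = 0 := by simp only [hZ'def]; exact if_neg hne2
  -- conclude
  by_cases heq : i / d = j / d
  · rw [if_pos heq]
    have e_i : i % d + j / d * d = i := by rw [← heq, Nat.mod_add_div']
    have e_j : j % d + j / d * d = j := Nat.mod_add_div' j d
    have hz := Ztd (j / d) (i % d) (j % d)
    rw [e_i, e_j] at hz
    have l1 : Z i j = f i j := Zlow i j hi hj
    have l2 : Z (i % d) (j % d) = f (i % d) (j % d) :=
      Zlow _ _ (lt_of_lt_of_le (Nat.mod_lt _ hdpos) hdlen)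
        (lt_of_lt_of_le (Nat.mod_lt _ hdpos) hdlen)
    rw [← l1, hz, l2]
  · rw [if_neg heq]
    rcases Nat.lt_or_ge (i / d) (j / d) with h | h
    · rw [← Zlow i j hi hj]; exact (aux i j hi hj h).1
    · have h' : j / d < i / d := by omega
      rw [← Zlow i j hi hj]; exact (aux j i hj hi h').2

lemma div_block_iff {n d : ℕ} (hd : 0 < d) (hn : 0 < n) (hdn : d ∣ n) (a b : ℕ) :
    (a / n = b / n ∧ a % n / d = b % n / d) ↔ a / d = b / d := by
  obtain ⟨m, rfl⟩ := hdn
  have hm : 0 < m := by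
    rcases Nat.eq_zero_or_pos m with rfl | h
    · simp at hn
    · exact h
  have e1 : ∀ x : ℕ, x / (d * m) = x / d / m := fun x => (Nat.div_div_eq_div_mul x d m).symm
  have e2 : ∀ x : ℕ, x % (d * m) / d = x / d % m := fun x => Nat.mod_mul_right_div_self x d m
  rw [e1, e1, e2, e2]
  constructor
  · rintro ⟨h1, h2⟩
    calc a / d = m * (a / d / m) + a / d % m := (Nat.div_add_mod _ m).symm
      _ = m * (b / d / m) + b / d % m := by rw [h1, h2]
      _ = b / d := Nat.div_add_mod _ m
  · rintro h
    exact ⟨by rw [h], by rw [h]⟩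


/-- For square matrices `X`, `X'` over a module, with `L = lcm(n,n')`,
`M = L/n`, `M' = L/n'`, `d = gcd(n,n')`: `⊕^M X = ⊕^{M'} X'` iff `X` and `X'` are direct
sums of repeated copies of a common `d × d` matrix `Y`. -/
theorem repeated_direct_sums_eq_iff_common_block
    {R : Type*} [CommRing R] {W : Type*} [AddCommGroup W] [Module R W]
    (n n' : ℕ) (hn : 0 < n) (hn' : 0 < n')
    (X : Matrix (Fin n) (Fin n) W) (X' : Matrix (Fin n') (Fin n') W) :
    castMat (Nat.div_mul_cancel (Nat.dvd_lcm_left n n')) (repDiag (Nat.lcm n n' / n) X) =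
      castMat (Nat.div_mul_cancel (Nat.dvd_lcm_right n n'))
        (repDiag (Nat.lcm n n' / n') X') ↔
    ∃ Y : Matrix (Fin (Nat.gcd n n')) (Fin (Nat.gcd n n')) W,
      X = castMat (Nat.div_mul_cancel (Nat.gcd_dvd_left n n'))
            (repDiag (n / Nat.gcd n n') Y) ∧
      X' = castMat (Nat.div_mul_cancel (Nat.gcd_dvd_right n n'))
            (repDiag (n' / Nat.gcd n n') Y) := by
  have hdpos : 0 < Nat.gcd n n' := Nat.gcd_pos_of_pos_left _ hn
  have hLpos : 0 < Nat.lcm n n' := Nat.lcm_pos hn hn'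
  have hdn : Nat.gcd n n' ∣ n := Nat.gcd_dvd_left n n'
  have hdn' : Nat.gcd n n' ∣ n' := Nat.gcd_dvd_right n n'
  have hnL : n ∣ Nat.lcm n n' := Nat.dvd_lcm_left n n'
  have hn'L : n' ∣ Nat.lcm n n' := Nat.dvd_lcm_right n n'
  have hdlen : Nat.gcd n n' ≤ n := Nat.le_of_dvd hn hdn
  have hdlen' : Nat.gcd n n' ≤ n' := Nat.le_of_dvd hn' hdn'
  have hnleL : n ≤ Nat.lcm n n' := Nat.le_of_dvd hLpos hnL
  constructor
  · intro hEq
    have Hentry : ∀ i j : Fin (Nat.lcm n n'),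
        (if (i : ℕ) / n = (j : ℕ) / n then
            X ⟨(i : ℕ) % n, Nat.mod_lt _ hn⟩ ⟨(j : ℕ) % n, Nat.mod_lt _ hn⟩ else 0)
        = (if (i : ℕ) / n' = (j : ℕ) / n' then
            X' ⟨(i : ℕ) % n', Nat.mod_lt _ hn'⟩ ⟨(j : ℕ) % n', Nat.mod_lt _ hn'⟩ else 0) := by
      intro i j
      rw [← castMat_repDiag_apply hn (Nat.div_mul_cancel (Nat.dvd_lcm_left n n')) X i j,
          ← castMat_repDiag_apply hn' (Nat.div_mul_cancel (Nat.dvd_lcm_right n n')) X' i j,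
          hEq]
    set f : ℕ → ℕ → W := fun a b => X ⟨a % n, Nat.mod_lt _ hn⟩ ⟨b % n, Nat.mod_lt _ hn⟩
      with hfdef
    set f' : ℕ → ℕ → W := fun a b => X' ⟨a % n', Nat.mod_lt _ hn'⟩ ⟨b % n', Nat.mod_lt _ hn'⟩
      with hf'def
    have hf : ∀ a b, f (a % n) (b % n) = f a b := by
      intro a b
      simp only [hfdef, Nat.mod_mod_of_dvd _ (dvd_refl n)]
    have hf' : ∀ a b, f' (a % n') (b % n') = f' a b := by
      intro a b
      simp only [hf'def, Nat.mod_mod_of_dvd _ (dvd_refl n')]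
    have H : ∀ a b, a < Nat.lcm n n' → b < Nat.lcm n n' →
        (if a / n = b / n then f a b else 0) = (if a / n' = b / n' then f' a b else 0) := by
      intro a b ha hb
      have h := Hentry ⟨a, ha⟩ ⟨b, hb⟩
      simpa [hfdef, hf'def] using h
    have flow : ∀ r s : ℕ, r < Nat.gcd n n' → s < Nat.gcd n n' → f' r s = f r s := by
      intro r s hr hs
      have h := H r s (lt_of_lt_of_le hr (hdlen.trans hnleL))
        (lt_of_lt_of_le hs (hdlen.trans hnleL))
      rw [Nat.div_eq_of_lt (lt_of_lt_of_le hr hdlen), Nat.div_eq_of_lt (lt_of_lt_of_le hs hdlen),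
          Nat.div_eq_of_lt (lt_of_lt_of_le hr hdlen'),
          Nat.div_eq_of_lt (lt_of_lt_of_le hs hdlen')] at h
      simpa using h.symm
    refine ⟨Matrix.of fun r s => f r.val s.val, ?_, ?_⟩
    · ext i j
      rw [castMat_repDiag_apply hdpos (Nat.div_mul_cancel (Nat.gcd_dvd_left n n'))]
      have hk := key_main hn hn' f f' hf hf' H i.2 j.2
      have efij : f (i : ℕ) (j : ℕ) = X i j := by
        simp [hfdef, Nat.mod_eq_of_lt i.isLt, Nat.mod_eq_of_lt j.isLt]
      rw [← efij, hk]
      rfl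
    · ext i j
      rw [castMat_repDiag_apply hdpos (Nat.div_mul_cancel (Nat.gcd_dvd_right n n'))]
      have H' : ∀ a b, a < Nat.lcm n' n → b < Nat.lcm n' n →
          (if a / n' = b / n' then f' a b else 0) = (if a / n = b / n then f a b else 0) := by
        intro a b ha hb
        rw [Nat.lcm_comm] at ha hb
        exact (H a b ha hb).symm
      have hk := key_main hn' hn f' f hf' hf H' i.2 j.2
      rw [Nat.gcd_comm n' n] at hk
      have efij : f' (i : ℕ) (j : ℕ) = X' i j := by
        simp [hf'def, Nat.mod_eq_of_lt i.isLt, Nat.mod_eq_of_lt j.isLt]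
      rw [← efij, hk]
      split_ifs with hc
      · exact flow _ _ (Nat.mod_lt _ hdpos) (Nat.mod_lt _ hdpos)
      · rfl
  · rintro ⟨Y, rfl, rfl⟩
    ext i j
    rw [castMat_repDiag_apply hn (Nat.div_mul_cancel (Nat.dvd_lcm_left n n')),
        castMat_repDiag_apply hn' (Nat.div_mul_cancel (Nat.dvd_lcm_right n n')),
        castMat_repDiag_apply hdpos (Nat.div_mul_cancel (Nat.gcd_dvd_left n n')),
        castMat_repDiag_apply hdpos (Nat.div_mul_cancel (Nat.gcd_dvd_right n n'))]
    simp only [Fin.val_mk, Nat.mod_mod_of_dvd _ hdn, Nat.mod_mod_of_dvd _ hdn']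
    have c1 := div_block_iff hdpos hn hdn (i : ℕ) (j : ℕ)
    have c2 := div_block_iff hdpos hn' hdn' (i : ℕ) (j : ℕ)
    split_ifs with h1 h2 h3 h4 <;> first | rfl | (exfalso; tauto)
end

section
/- Let s ≥ 1 and Z ∈ ℂ^{s×s}. For δ > 0 set M_ℓ(δ) = sup { ‖W^ℓ‖ : m ≥ 1, W ∈ ℂ^{sm×sm}, ‖W − ⊕^m Z‖ < δ }, where ‖·‖ is the operator norm. Then lim_{δ→0⁺} limsup_{ℓ→∞} M_ℓ(δ)^{1/ℓ} = lim_{δ→0⁺} liminf_{ℓ→∞} M_ℓ(δ)^{1/ℓ} = r_spec(Z), the spectral radius of Z. (Both outer limits exist since M_ℓ(δ) is nondecreasing in δ; moreover liminf_{ℓ→∞} M_ℓ(δ)^{1/ℓ} ≥ r_spec(Z) for every δ > 0, and for every ε > 0 there is δ > 0 with limsup_{ℓ→∞} M_ℓ(δ)^{1/ℓ} ≤ r_spec(Z) + ε.) -/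
open Matrix

/-- The operator norm of a complex matrix with respect to the standard Euclidean
norms. -/
noncomputable def cOpNorm {n m : ℕ} (S : Matrix (Fin n) (Fin m) ℂ) : ℝ :=
  ‖LinearMap.toContinuousLinearMap (Matrix.toEuclideanLin S)‖

/-- The spectral radius of a complex matrix: the maximum of the absolute values of its
eigenvalues. -/
noncomputable def specRad {s : ℕ} (Z : Matrix (Fin s) (Fin s) ℂ) : ℝ :=
  sSup ((fun z => ‖z‖) '' spectrum ℂ Z)

/-- `M_ℓ(δ) = sup {‖W^ℓ‖ : m ≥ 1, W ∈ ℂ^{sm×sm}, ‖W − ⊕^m Z‖ < δ}`. -/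
noncomputable def Mval {s : ℕ} (Z : Matrix (Fin s) (Fin s) ℂ) (ℓ : ℕ) (δ : ℝ) : ℝ :=
  sSup {c : ℝ | ∃ (m : ℕ) (W : Matrix (Fin (m * s)) (Fin (m * s)) ℂ),
    0 < m ∧ cOpNorm (W - repDiag m Z) < δ ∧ c = cOpNorm (W ^ ℓ)}

/-!
`repDiag m` is an injective ⋆-homomorphism of C⋆-algebras, hence isometric, so
`‖(⊕^m Z)^ℓ‖ = ‖Z^ℓ‖` and Gelfand's formula gives the lower bound. For the upper bound fix
`a > r_spec(Z)` and `N` with `‖Z^N‖ < a^N`. Since `x ↦ x^N` is Lipschitz on bounded sets with a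
constant depending only on the bound, `‖W^N‖ ≤ a^N` whenever `‖W - ⊕^m Z‖` is small, uniformly
in `m`; writing `ℓ = qN + r` then gives `‖W^ℓ‖ ≤ C a^ℓ`.
-/

section repDiag

variable {p k : ℕ}

lemma repDiag_eq_submatrix_blockDiagonal {α : Type*} [Zero α] (A : Matrix (Fin p) (Fin p) α) :
    repDiag k A = (blockDiagonal fun _ : Fin k => A).submatrix
      (finProdFinEquiv.symm.trans (Equiv.prodComm _ _))
      (finProdFinEquiv.symm.trans (Equiv.prodComm _ _)) := by
  ext a b
  simp [repDiag, blockDiagonal_apply]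

lemma repDiag_one {α : Type*} [Zero α] [One α] : repDiag k (1 : Matrix (Fin p) (Fin p) α) = 1 := by
  rw [repDiag_eq_submatrix_blockDiagonal, ← Pi.one_def, blockDiagonal_one, submatrix_one_equiv]

lemma repDiag_mul {α : Type*} [NonUnitalNonAssocSemiring α] (A B : Matrix (Fin p) (Fin p) α) :
    repDiag k (A * B) = repDiag k A * repDiag k B := by
  simp only [repDiag_eq_submatrix_blockDiagonal, submatrix_mul_equiv, blockDiagonal_mul]

lemma repDiag_pow {α : Type*} [Semiring α] (A : Matrix (Fin p) (Fin p) α) (n : ℕ) :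
    repDiag k (A ^ n) = repDiag k A ^ n := by
  induction n with
  | zero => exact repDiag_one
  | succ n ih => rw [pow_succ, pow_succ, repDiag_mul, ih]

lemma repDiag_add {α : Type*} [AddZeroClass α] (A B : Matrix (Fin p) (Fin p) α) :
    repDiag k (A + B) = repDiag k A + repDiag k B := by
  ext a b
  simp only [repDiag, Matrix.add_apply, of_apply]
  split_ifs <;> simp

lemma repDiag_smul {R α : Type*} [Zero α] [SMulZeroClass R α] (r : R)
    (A : Matrix (Fin p) (Fin p) α) : repDiag k (r • A) = r • repDiag k A := by
  ext a b
  simp only [repDiag, Matrix.smul_apply, of_apply]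
  split_ifs <;> simp

lemma repDiag_conjTranspose {α : Type*} [AddMonoid α] [StarAddMonoid α]
    (A : Matrix (Fin p) (Fin p) α) : repDiag k Aᴴ = (repDiag k A)ᴴ := by
  ext a b
  simp only [repDiag, conjTranspose_apply, of_apply, eq_comm (a := (finProdFinEquiv.symm a).1)]
  split_ifs <;> simp

lemma repDiag_injective {α : Type*} [Zero α] (hk : 0 < k) :
    Function.Injective (repDiag (α := α) (p := p) k) := by
  intro A B h
  ext i j
  simpa only [repDiag, of_apply, Equiv.symm_apply_apply, if_true] using
    congrFun₂ h (finProdFinEquiv (⟨0, hk⟩, i)) (finProdFinEquiv (⟨0, hk⟩, j))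

def repDiagStarAlgHom (R : Type*) [CommSemiring R] [StarRing R] (k p : ℕ) :
    Matrix (Fin p) (Fin p) R →⋆ₐ[R] Matrix (Fin (k * p)) (Fin (k * p)) R where
  toFun := repDiag k
  map_one' := repDiag_one
  map_mul' := repDiag_mul
  map_zero' := by ext; simp [repDiag]
  map_add' := repDiag_add
  commutes' r := by simp only [Algebra.algebraMap_eq_smul_one, repDiag_smul, repDiag_one]
  map_star' := repDiag_conjTranspose

open scoped Matrix.Norms.L2Operator in
lemma norm_repDiag (hk : 0 < k) (A : Matrix (Fin p) (Fin p) ℂ) : ‖repDiag k A‖ = ‖A‖ :=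
  NonUnitalStarAlgHom.norm_map (repDiagStarAlgHom ℂ k p) (repDiag_injective hk) A

end repDiag

open Filter Topology
open scoped Matrix.Norms.L2Operator

section SpectralRadius

variable {s : ℕ}

lemma specRad_eq_toReal_spectralRadius (hs : 0 < s) (Z : Matrix (Fin s) (Fin s) ℂ) :
    specRad Z = (spectralRadius ℂ Z).toReal := by
  have : Nonempty (Fin s) := ⟨⟨0, hs⟩⟩
  obtain ⟨k, hk, hkZ⟩ := spectrum.exists_nnnorm_eq_spectralRadius_of_nonempty (spectrum.nonempty Z)
  have hmax : IsGreatest ((fun z => ‖z‖) '' spectrum ℂ Z) ‖k‖ := by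
    refine ⟨⟨k, hk, rfl⟩, ?_⟩
    rintro _ ⟨z, hz, rfl⟩
    have : (‖z‖₊ : ENNReal) ≤ ‖k‖₊ := hkZ ▸ le_iSup₂ (f := fun z (_ : z ∈ spectrum ℂ Z) =>
      (‖z‖₊ : ENNReal)) z hz
    exact_mod_cast this
  rw [specRad, hmax.csSup_eq, ← hkZ, ENNReal.coe_toReal, coe_nnnorm]

lemma tendsto_norm_pow_rpow_specRad (hs : 0 < s) (Z : Matrix (Fin s) (Fin s) ℂ) :
    Tendsto (fun ℓ : ℕ => ‖Z ^ ℓ‖ ^ (1 / (ℓ : ℝ))) atTop (𝓝 (specRad Z)) := by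
  have : Nonempty (Fin s) := ⟨⟨0, hs⟩⟩
  rw [specRad_eq_toReal_spectralRadius hs]
  have hfin : spectralRadius ℂ Z ≠ ⊤ :=
    ((spectrum.spectralRadius_le_nnnorm Z).trans_lt ENNReal.coe_lt_top).ne
  refine ((ENNReal.tendsto_toReal hfin).comp
    (spectrum.pow_norm_pow_one_div_tendsto_nhds_spectralRadius Z)).congr fun ℓ => ?_
  exact ENNReal.toReal_ofReal (by positivity)

lemma specRad_nonneg (hs : 0 < s) (Z : Matrix (Fin s) (Fin s) ℂ) : 0 ≤ specRad Z :=
  specRad_eq_toReal_spectralRadius hs Z ▸ ENNReal.toReal_nonneg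

lemma exists_norm_pow_lt_pow (hs : 0 < s) (Z : Matrix (Fin s) (Fin s) ℂ) {a : ℝ}
    (ha : specRad Z < a) : ∃ N, 0 < N ∧ ‖Z ^ N‖ < a ^ N := by
  obtain ⟨N, hN, hpos⟩ := ((tendsto_norm_pow_rpow_specRad hs Z).eventually_lt_const ha).and
    (eventually_gt_atTop 0) |>.exists
  refine ⟨N, hpos, ?_⟩
  rwa [one_div, Real.rpow_inv_lt_iff_of_pos (norm_nonneg _) ((specRad_nonneg hs Z).trans ha.le)
    (by positivity), Real.rpow_natCast] at hN

end SpectralRadius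

section PowerBounds

variable {R : Type*} [NormedRing R] [NormOneClass R]

lemma norm_pow_sub_pow_le {x y : R} {b : ℝ} (hx : ‖x‖ ≤ b) (hy : ‖y‖ ≤ b) (n : ℕ) :
    ‖x ^ n - y ^ n‖ ≤ n * b ^ (n - 1) * ‖x - y‖ := by
  have hb : 0 ≤ b := (norm_nonneg x).trans hx
  induction n with
  | zero => simp
  | succ n ih =>
    have hsplit : x ^ (n + 1) - y ^ (n + 1) = x ^ n * (x - y) + (x ^ n - y ^ n) * y := by
      simp only [mul_sub, sub_mul, pow_succ]
      abel
    have hxn : ‖x ^ n‖ ≤ b ^ n := (norm_pow_le x n).trans (pow_le_pow_left₀ (norm_nonneg x) hx n)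
    have hcoef : (n : ℝ) * b ^ (n - 1) * b = n * b ^ n := by
      rcases n with _ | n
      · simp
      · rw [Nat.add_sub_cancel, pow_succ]; ring
    calc ‖x ^ (n + 1) - y ^ (n + 1)‖
        ≤ ‖x ^ n‖ * ‖x - y‖ + ‖x ^ n - y ^ n‖ * ‖y‖ := by
          rw [hsplit]
          exact (norm_add_le _ _).trans (add_le_add (norm_mul_le _ _) (norm_mul_le _ _))
      _ ≤ b ^ n * ‖x - y‖ + (n * b ^ (n - 1) * ‖x - y‖) * b := by gcongr
      _ = ((n + 1 : ℕ) : ℝ) * b ^ (n + 1 - 1) * ‖x - y‖ := by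
          rw [mul_right_comm _ ‖x - y‖, hcoef, Nat.add_sub_cancel]; push_cast; ring

lemma norm_pow_le_of_norm_pow_le {x : R} {a B : ℝ} {N : ℕ} (hN : 0 < N) (ha : 0 < a)
    (hx : ‖x‖ ≤ B) (hxN : ‖x ^ N‖ ≤ a ^ N) (ℓ : ℕ) :
    ‖x ^ ℓ‖ ≤ max 1 (B / a) ^ N * a ^ ℓ := by
  have hB : 0 ≤ B := (norm_nonneg x).trans hx
  have hdiv : ℓ = N * (ℓ / N) + ℓ % N := (Nat.div_add_mod ℓ N).symm
  have hsplit_a : a ^ ℓ = (a ^ N) ^ (ℓ / N) * a ^ (ℓ % N) := by rw [← pow_mul, ← pow_add, ← hdiv]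
  calc ‖x ^ ℓ‖
      = ‖(x ^ N) ^ (ℓ / N) * x ^ (ℓ % N)‖ := by rw [← pow_mul, ← pow_add, ← hdiv]
    _ ≤ (a ^ N) ^ (ℓ / N) * B ^ (ℓ % N) := by
        refine (norm_mul_le _ _).trans (mul_le_mul ?_ ?_ (norm_nonneg _) (by positivity))
        · exact (norm_pow_le _ _).trans (pow_le_pow_left₀ (norm_nonneg _) hxN _)
        · exact (norm_pow_le _ _).trans (pow_le_pow_left₀ (norm_nonneg _) hx _)
    _ = (B / a) ^ (ℓ % N) * a ^ ℓ := by
        rw [div_pow, hsplit_a]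
        field_simp
    _ ≤ max 1 (B / a) ^ N * a ^ ℓ := by
        gcongr
        exact (pow_le_pow_left₀ (by positivity) (le_max_right 1 _) _).trans
          (pow_le_pow_right₀ (le_max_left _ _) (Nat.mod_lt ℓ hN).le)

end PowerBounds

section Mval

variable {s : ℕ} (Z : Matrix (Fin s) (Fin s) ℂ)

lemma cOpNorm_eq_norm {n m : ℕ} (S : Matrix (Fin n) (Fin m) ℂ) : cOpNorm S = ‖S‖ := rfl

lemma norm_le_of_norm_sub_repDiag_lt {m : ℕ} (hm : 0 < m)
    {W : Matrix (Fin (m * s)) (Fin (m * s)) ℂ} {δ : ℝ} (hW : ‖W - repDiag m Z‖ < δ) :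
    ‖W‖ ≤ ‖Z‖ + δ :=
  calc ‖W‖ ≤ ‖repDiag m Z‖ + ‖W - repDiag m Z‖ := norm_le_insert' W (repDiag m Z)
    _ ≤ ‖Z‖ + δ := by rw [norm_repDiag hm]; exact add_le_add_right hW.le _

lemma Mval_le_of_forall {ℓ : ℕ} {δ c : ℝ} (hc : 0 ≤ c)
    (h : ∀ m, 0 < m → ∀ W : Matrix (Fin (m * s)) (Fin (m * s)) ℂ,
      ‖W - repDiag m Z‖ < δ → ‖W ^ ℓ‖ ≤ c) :
    Mval Z ℓ δ ≤ c := by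
  refine Real.sSup_le ?_ hc
  rintro _ ⟨m, W, hm, hW, rfl⟩
  exact h m hm W hW

lemma norm_pow_le_of_norm_sub_repDiag_lt (hs : 0 < s) {m : ℕ} (hm : 0 < m)
    {W : Matrix (Fin (m * s)) (Fin (m * s)) ℂ} {δ : ℝ} (hW : ‖W - repDiag m Z‖ < δ) (ℓ : ℕ) :
    ‖W ^ ℓ‖ ≤ (‖Z‖ + δ) ^ ℓ := by
  have : Nonempty (Fin (m * s)) := ⟨⟨0, Nat.mul_pos hm hs⟩⟩
  exact (norm_pow_le W ℓ).trans
    (pow_le_pow_left₀ (norm_nonneg W) (norm_le_of_norm_sub_repDiag_lt Z hm hW) ℓ)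

lemma norm_pow_le_Mval (hs : 0 < s) {δ : ℝ} (hδ : 0 < δ) (ℓ : ℕ) : ‖Z ^ ℓ‖ ≤ Mval Z ℓ δ := by
  refine le_csSup ⟨(‖Z‖ + δ) ^ ℓ, ?_⟩ ⟨1, repDiag 1 Z, one_pos, ?_, ?_⟩
  · rintro _ ⟨m, W, hm, hW, rfl⟩
    exact norm_pow_le_of_norm_sub_repDiag_lt Z hs hm hW ℓ
  · simpa [cOpNorm_eq_norm] using hδ
  · rw [cOpNorm_eq_norm, ← repDiag_pow, norm_repDiag one_pos]

lemma exists_forall_norm_pow_le (hs : 0 < s) {a : ℝ} (ha : specRad Z < a) :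
    ∃ δ > 0, ∃ C > 0, ∀ m, 0 < m → ∀ W : Matrix (Fin (m * s)) (Fin (m * s)) ℂ,
      ‖W - repDiag m Z‖ < δ → ∀ ℓ, ‖W ^ ℓ‖ ≤ C * a ^ ℓ := by
  obtain ⟨N, hN, hZN⟩ := exists_norm_pow_lt_pow hs Z ha
  have ha0 : 0 < a := (specRad_nonneg hs Z).trans_lt ha
  set B := ‖Z‖ + 1
  set K : ℝ := N * B ^ (N - 1)
  have hK : 0 < K := by positivity
  refine ⟨min 1 ((a ^ N - ‖Z ^ N‖) / K), by positivity, max 1 (B / a) ^ N, by positivity,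
    fun m hm W hW ℓ => ?_⟩
  have : Nonempty (Fin (m * s)) := ⟨⟨0, Nat.mul_pos hm hs⟩⟩
  have hWB : ‖W‖ ≤ B :=
    (norm_le_of_norm_sub_repDiag_lt Z hm hW).trans (add_le_add_right (min_le_left _ _) _)
  have hDB : ‖repDiag m Z‖ ≤ B := by rw [norm_repDiag hm]; linarith
  have hDN : ‖repDiag m Z ^ N‖ = ‖Z ^ N‖ := by rw [← repDiag_pow, norm_repDiag hm]
  have hWN : ‖W ^ N‖ ≤ a ^ N :=
    calc ‖W ^ N‖ ≤ ‖repDiag m Z ^ N‖ + ‖W ^ N - repDiag m Z ^ N‖ := norm_le_insert' _ _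
      _ ≤ ‖Z ^ N‖ + K * ((a ^ N - ‖Z ^ N‖) / K) := by
        rw [hDN]
        exact add_le_add le_rfl ((norm_pow_sub_pow_le hWB hDB N).trans
          (mul_le_mul_of_nonneg_left (hW.le.trans (min_le_right _ _)) hK.le))
      _ = a ^ N := by rw [mul_div_cancel₀ _ hK.ne', add_sub_cancel]
  exact norm_pow_le_of_norm_pow_le hN ha0 hWB hWN ℓ

end Mval

section GrowthRate

variable {s : ℕ} (Z : Matrix (Fin s) (Fin s) ℂ)

lemma Mval_nonneg (hs : 0 < s) {δ : ℝ} (hδ : 0 < δ) (ℓ : ℕ) : 0 ≤ Mval Z ℓ δ :=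
  (norm_nonneg _).trans (norm_pow_le_Mval Z hs hδ ℓ)

lemma isBoundedUnder_ge_Mval_rpow (hs : 0 < s) {δ : ℝ} (hδ : 0 < δ) :
    IsBoundedUnder (· ≥ ·) atTop fun ℓ : ℕ => Mval Z ℓ δ ^ (1 / (ℓ : ℝ)) :=
  isBoundedUnder_of ⟨0, fun ℓ => Real.rpow_nonneg (Mval_nonneg Z hs hδ ℓ) _⟩

lemma isBoundedUnder_le_Mval_rpow (hs : 0 < s) {δ : ℝ} (hδ : 0 < δ) :
    IsBoundedUnder (· ≤ ·) atTop fun ℓ : ℕ => Mval Z ℓ δ ^ (1 / (ℓ : ℝ)) := by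
  refine isBoundedUnder_of_eventually_le (a := ‖Z‖ + δ) ?_
  filter_upwards [eventually_gt_atTop 0] with ℓ hℓ
  have hM : Mval Z ℓ δ ≤ (‖Z‖ + δ) ^ ℓ :=
    Mval_le_of_forall Z (by positivity) fun m hm W hW =>
      norm_pow_le_of_norm_sub_repDiag_lt Z hs hm hW ℓ
  rwa [one_div, Real.rpow_inv_le_iff_of_pos (Mval_nonneg Z hs hδ ℓ) (by positivity)
    (by positivity), Real.rpow_natCast]

lemma specRad_le_liminf_Mval_rpow (hs : 0 < s) {δ : ℝ} (hδ : 0 < δ) :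
    specRad Z ≤ liminf (fun ℓ : ℕ => Mval Z ℓ δ ^ (1 / (ℓ : ℝ))) atTop := by
  have hgelfand := tendsto_norm_pow_rpow_specRad hs Z
  rw [← hgelfand.liminf_eq]
  exact liminf_le_liminf (Eventually.of_forall fun ℓ =>
      Real.rpow_le_rpow (norm_nonneg _) (norm_pow_le_Mval Z hs hδ ℓ) (by positivity))
    hgelfand.isBoundedUnder_ge (isBoundedUnder_le_Mval_rpow Z hs hδ).isCoboundedUnder_ge

lemma eventually_limsup_Mval_rpow_le (hs : 0 < s) {a : ℝ} (ha : specRad Z < a) :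
    ∀ᶠ δ in 𝓝[>] 0, limsup (fun ℓ : ℕ => Mval Z ℓ δ ^ (1 / (ℓ : ℝ))) atTop ≤ a := by
  obtain ⟨δ₀, hδ₀, C, hC, hbound⟩ := exists_forall_norm_pow_le Z hs ha
  have ha0 : 0 < a := (specRad_nonneg hs Z).trans_lt ha
  have hlim : Tendsto (fun ℓ : ℕ => C ^ (1 / (ℓ : ℝ)) * a) atTop (𝓝 a) := by
    simpa using (tendsto_const_nhds.rpow tendsto_one_div_atTop_nhds_zero_nat
      (Or.inl hC.ne')).mul_const a
  filter_upwards [Ioc_mem_nhdsGT hδ₀] with δ ⟨hδ, hδδ₀⟩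
  rw [← hlim.limsup_eq]
  refine limsup_le_limsup ?_ (isBoundedUnder_ge_Mval_rpow Z hs hδ).isCoboundedUnder_le
    hlim.isBoundedUnder_le
  filter_upwards [eventually_gt_atTop 0] with ℓ hℓ
  have hM : Mval Z ℓ δ ≤ C * a ^ ℓ := Mval_le_of_forall Z (by positivity) fun m hm W hW =>
    hbound m hm W (hW.trans_le hδδ₀) ℓ
  calc Mval Z ℓ δ ^ (1 / (ℓ : ℝ)) ≤ (C * a ^ ℓ) ^ (1 / (ℓ : ℝ)) :=
        Real.rpow_le_rpow (Mval_nonneg Z hs hδ ℓ) hM (by positivity)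
    _ = C ^ (1 / (ℓ : ℝ)) * a := by
        rw [Real.mul_rpow hC.le (by positivity), one_div, Real.pow_rpow_inv_natCast ha0.le hℓ.ne']

end GrowthRate

/-- **Lemma 8.23.** The uniform local growth rate of powers around the
orbit of repeated direct sums of `Z` equals the spectral radius of `Z`:
`lim_{δ→0⁺} limsup_ℓ M_ℓ(δ)^{1/ℓ} = lim_{δ→0⁺} liminf_ℓ M_ℓ(δ)^{1/ℓ} = r_spec(Z)`;
moreover `liminf_ℓ M_ℓ(δ)^{1/ℓ} ≥ r_spec(Z)` for every `δ > 0`, and for every `ε > 0`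
there is `δ > 0` with `limsup_ℓ M_ℓ(δ)^{1/ℓ} ≤ r_spec(Z) + ε`. -/
theorem power_growth_rate_eq_spectral_radius
    {s : ℕ} (hs : 0 < s) (Z : Matrix (Fin s) (Fin s) ℂ) :
    Filter.Tendsto
        (fun δ : ℝ =>
          Filter.limsup (fun ℓ : ℕ => Mval Z ℓ δ ^ (1 / (ℓ : ℝ))) Filter.atTop)
        (nhdsWithin 0 (Set.Ioi 0)) (nhds (specRad Z)) ∧
    Filter.Tendsto
        (fun δ : ℝ =>
          Filter.liminf (fun ℓ : ℕ => Mval Z ℓ δ ^ (1 / (ℓ : ℝ))) Filter.atTop)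
        (nhdsWithin 0 (Set.Ioi 0)) (nhds (specRad Z)) ∧
    (∀ δ : ℝ, 0 < δ →
      specRad Z ≤ Filter.liminf (fun ℓ : ℕ => Mval Z ℓ δ ^ (1 / (ℓ : ℝ))) Filter.atTop) ∧
    ∀ ε : ℝ, 0 < ε → ∃ δ : ℝ, 0 < δ ∧
      Filter.limsup (fun ℓ : ℕ => Mval Z ℓ δ ^ (1 / (ℓ : ℝ))) Filter.atTop ≤
        specRad Z + ε := by
  have hlow := fun δ (hδ : 0 < δ) => specRad_le_liminf_Mval_rpow Z hs hδ
  have hmid := fun δ (hδ : 0 < δ) => liminf_le_limsup (isBoundedUnder_le_Mval_rpow Z hs hδ)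
    (isBoundedUnder_ge_Mval_rpow Z hs hδ)
  have hup := fun a (ha : specRad Z < a) => eventually_limsup_Mval_rpow_le Z hs ha
  have hpos : ∀ᶠ δ in 𝓝[>] (0 : ℝ), 0 < δ := self_mem_nhdsWithin
  refine ⟨tendsto_order.2 ⟨fun a ha => ?_, fun a ha => ?_⟩,
    tendsto_order.2 ⟨fun a ha => ?_, fun a ha => ?_⟩, hlow, fun ε hε => ?_⟩
  · filter_upwards [hpos] with δ hδ using ha.trans_le ((hlow δ hδ).trans (hmid δ hδ))
  · obtain ⟨b, hρb, hba⟩ := exists_between ha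
    filter_upwards [hup b hρb] with δ h using h.trans_lt hba
  · filter_upwards [hpos] with δ hδ using ha.trans_le (hlow δ hδ)
  · obtain ⟨b, hρb, hba⟩ := exists_between ha
    filter_upwards [hpos, hup b hρb] with δ hδ h using ((hmid δ hδ).trans h).trans_lt hba
  · obtain ⟨δ, h, hδ⟩ := ((hup _ (lt_add_of_pos_right _ hε)).and hpos).exists
    exact ⟨δ, hδ, h⟩
end

section
/- Let R be a commutative ring with identity, M and N modules over R, Ω ⊆ M_nc a nc set, and f : Ω → N_nc a nc function. Then there exists a unique nc function f̃ : Ω̃ → N_nc on the similarity invariant envelope Ω̃ of Ω such that f̃ restricted to Ω equals f. (Explicitly, f̃(S X S⁻¹) = S f(X) S⁻¹ for X ∈ Ω_n and invertible S ∈ R^{n×n}, and this is well defined.) -/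
open Matrix

/-- Product of a scalar matrix with a matrix over a module. -/
def scalMul {R : Type*} [CommRing R] {M : Type*} [AddCommGroup M] [Module R M]
    {p n m : ℕ} (S : Matrix (Fin p) (Fin n) R) (X : Matrix (Fin n) (Fin m) M) :
    Matrix (Fin p) (Fin m) M :=
  Matrix.of fun i j => ∑ k, S i k • X k j

/-- Product of a matrix over a module with a scalar matrix. -/
def mulScal {R : Type*} [CommRing R] {M : Type*} [AddCommGroup M] [Module R M]
    {n m q : ℕ} (X : Matrix (Fin n) (Fin m) M) (T : Matrix (Fin m) (Fin q) R) :
    Matrix (Fin n) (Fin q) M :=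
  Matrix.of fun i j => ∑ k, T k j • X i k

/-- Direct sum of two square matrices over a module. -/
def dSum {M : Type*} [AddCommGroup M] {n m : ℕ}
    (X : Matrix (Fin n) (Fin n) M) (Y : Matrix (Fin m) (Fin m) M) :
    Matrix (Fin (n + m)) (Fin (n + m)) M :=
  (Matrix.reindex finSumFinEquiv finSumFinEquiv) (Matrix.fromBlocks X 0 0 Y)

/-- Block upper triangular 2×2 block matrix `[[X, Z],[0, Y]]`. -/
def upTri {M : Type*} [AddCommGroup M] {n m : ℕ}
    (X : Matrix (Fin n) (Fin n) M) (Z : Matrix (Fin n) (Fin m) M)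
    (Y : Matrix (Fin m) (Fin m) M) :
    Matrix (Fin (n + m)) (Fin (n + m)) M :=
  (Matrix.reindex finSumFinEquiv finSumFinEquiv) (Matrix.fromBlocks X Z 0 Y)

/-- A noncommutative (nc) set: closed under direct sums. -/
def IsNCSet {M : Type*} [AddCommGroup M]
    (Ω : ∀ n : ℕ, Set (Matrix (Fin n) (Fin n) M)) : Prop :=
  ∀ (n m : ℕ) (X : Matrix (Fin n) (Fin n) M) (Y : Matrix (Fin m) (Fin m) M),
    X ∈ Ω n → Y ∈ Ω m → dSum X Y ∈ Ω (n + m)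

/-- `f` respects direct sums on `Ω`. -/
def RespectsDirSums {M N : Type*} [AddCommGroup M] [AddCommGroup N]
    (Ω : ∀ n : ℕ, Set (Matrix (Fin n) (Fin n) M))
    (f : ∀ n : ℕ, Matrix (Fin n) (Fin n) M → Matrix (Fin n) (Fin n) N) : Prop :=
  ∀ (n m : ℕ) (X : Matrix (Fin n) (Fin n) M) (Y : Matrix (Fin m) (Fin m) M),
    X ∈ Ω n → Y ∈ Ω m → f (n + m) (dSum X Y) = dSum (f n X) (f m Y)

/-- `f` respects similarities on `Ω`. -/
def RespectsSim (R : Type*) [CommRing R] {M N : Type*} [AddCommGroup M] [Module R M]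
    [AddCommGroup N] [Module R N]
    (Ω : ∀ n : ℕ, Set (Matrix (Fin n) (Fin n) M))
    (f : ∀ n : ℕ, Matrix (Fin n) (Fin n) M → Matrix (Fin n) (Fin n) N) : Prop :=
  ∀ (n : ℕ) (X : Matrix (Fin n) (Fin n) M) (S T : Matrix (Fin n) (Fin n) R),
    X ∈ Ω n → S * T = 1 → T * S = 1 → scalMul S (mulScal X T) ∈ Ω n →
    f n (scalMul S (mulScal X T)) = scalMul S (mulScal (f n X) T)

/-- `f` respects intertwining on `Ω`: `X T = T Y` implies `f(X) T = T f(Y)`. -/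
def RespectsIntertwining (R : Type*) [CommRing R] {M N : Type*} [AddCommGroup M]
    [Module R M] [AddCommGroup N] [Module R N]
    (Ω : ∀ n : ℕ, Set (Matrix (Fin n) (Fin n) M))
    (f : ∀ n : ℕ, Matrix (Fin n) (Fin n) M → Matrix (Fin n) (Fin n) N) : Prop :=
  ∀ (n m : ℕ) (X : Matrix (Fin n) (Fin n) M) (Y : Matrix (Fin m) (Fin m) M)
    (T : Matrix (Fin n) (Fin m) R),
    X ∈ Ω n → Y ∈ Ω m → mulScal X T = scalMul T Y →
    mulScal (f n X) T = scalMul T (f m Y)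

/-- `Ω` is invariant under similarities. -/
def SimInvariant (R : Type*) [CommRing R] {M : Type*} [AddCommGroup M] [Module R M]
    (Ω : ∀ n : ℕ, Set (Matrix (Fin n) (Fin n) M)) : Prop :=
  ∀ (n : ℕ) (X : Matrix (Fin n) (Fin n) M) (S T : Matrix (Fin n) (Fin n) R),
    X ∈ Ω n → S * T = 1 → T * S = 1 → scalMul S (mulScal X T) ∈ Ω n

/-- `Ω` is a right admissible nc set. -/
def RightAdmissible (R : Type*) [CommRing R] {M : Type*} [AddCommGroup M] [Module R M]
    (Ω : ∀ n : ℕ, Set (Matrix (Fin n) (Fin n) M)) : Prop :=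
  ∀ (n m : ℕ) (X : Matrix (Fin n) (Fin n) M) (Y : Matrix (Fin m) (Fin m) M)
    (Z : Matrix (Fin n) (Fin m) M), X ∈ Ω n → Y ∈ Ω m →
    ∃ r : Rˣ, upTri X ((r : R) • Z) Y ∈ Ω (n + m)

/-- The similarity invariant envelope of `Ω`. -/
def simEnv (R : Type*) [CommRing R] {M : Type*} [AddCommGroup M] [Module R M]
    (Ω : ∀ n : ℕ, Set (Matrix (Fin n) (Fin n) M)) :
    ∀ n : ℕ, Set (Matrix (Fin n) (Fin n) M) :=
  fun n => {W | ∃ (X : Matrix (Fin n) (Fin n) M) (S T : Matrix (Fin n) (Fin n) R),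
    X ∈ Ω n ∧ S * T = 1 ∧ T * S = 1 ∧ W = scalMul S (mulScal X T)}


section Aux

variable {R : Type*} [CommRing R] {M : Type*} [AddCommGroup M] [Module R M]

@[simp] lemma scalMul_one {n m : ℕ} (X : Matrix (Fin n) (Fin m) M) :
    scalMul (1 : Matrix (Fin n) (Fin n) R) X = X := by
  ext i j
  simp [scalMul, Matrix.one_apply, ite_smul]

@[simp] lemma mulScal_one {n m : ℕ} (X : Matrix (Fin n) (Fin m) M) :
    mulScal X (1 : Matrix (Fin m) (Fin m) R) = X := by
  ext i j
  simp [mulScal, Matrix.one_apply, ite_smul]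

lemma scalMul_scalMul {p q n m : ℕ} (S : Matrix (Fin p) (Fin q) R)
    (S' : Matrix (Fin q) (Fin n) R) (X : Matrix (Fin n) (Fin m) M) :
    scalMul S (scalMul S' X) = scalMul (S * S') X := by
  ext i j
  simp only [scalMul, Matrix.of_apply, Matrix.mul_apply, Finset.smul_sum,
    Finset.sum_smul, smul_smul]
  rw [Finset.sum_comm]

lemma mulScal_mulScal {n m p q : ℕ} (X : Matrix (Fin n) (Fin m) M)
    (T : Matrix (Fin m) (Fin p) R) (T' : Matrix (Fin p) (Fin q) R) :
    mulScal (mulScal X T) T' = mulScal X (T * T') := by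
  ext i j
  simp only [mulScal, Matrix.of_apply, Matrix.mul_apply, Finset.smul_sum,
    Finset.sum_smul, smul_smul]
  rw [Finset.sum_comm]
  simp [mul_comm]

lemma scalMul_mulScal {p n m q : ℕ} (S : Matrix (Fin p) (Fin n) R)
    (X : Matrix (Fin n) (Fin m) M) (T : Matrix (Fin m) (Fin q) R) :
    scalMul S (mulScal X T) = mulScal (scalMul S X) T := by
  ext i j
  simp only [scalMul, mulScal, Matrix.of_apply, Finset.smul_sum, smul_smul]
  rw [Finset.sum_comm]
  simp [mul_comm]

lemma collapse {p n m q r s : ℕ} (S : Matrix (Fin p) (Fin n) R)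
    (S' : Matrix (Fin n) (Fin m) R) (X : Matrix (Fin m) (Fin q) M)
    (T' : Matrix (Fin q) (Fin r) R) (T : Matrix (Fin r) (Fin s) R) :
    scalMul S (mulScal (scalMul S' (mulScal X T')) T)
      = scalMul (S * S') (mulScal X (T' * T)) := by
  rw [← scalMul_mulScal S' (mulScal X T') T, mulScal_mulScal, scalMul_scalMul]

lemma dSum_blocksum {n m : ℕ} {α : Type*} [AddCommMonoid α]
    (F : Fin (n + m) → α) :
    ∑ k, F k = (∑ k : Fin n, F (finSumFinEquiv (Sum.inl k)))
      + ∑ k : Fin m, F (finSumFinEquiv (Sum.inr k)) := by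
  rw [← Equiv.sum_comp finSumFinEquiv F, Fintype.sum_sum_type]

lemma dSum_apply {n m : ℕ} (X : Matrix (Fin n) (Fin n) M)
    (Y : Matrix (Fin m) (Fin m) M) (i j : Fin (n + m)) :
    dSum X Y i j = Matrix.fromBlocks X 0 0 Y (finSumFinEquiv.symm i) (finSumFinEquiv.symm j) := by
  rfl

lemma scalMul_dSum {n m : ℕ} (S : Matrix (Fin n) (Fin n) R)
    (S' : Matrix (Fin m) (Fin m) R) (X : Matrix (Fin n) (Fin n) M)
    (X' : Matrix (Fin m) (Fin m) M) :
    scalMul (dSum S S') (dSum X X') = dSum (scalMul S X) (scalMul S' X') := by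
  ext i j
  rw [show (scalMul (dSum S S') (dSum X X')) i j = ∑ k, dSum S S' i k • dSum X X' k j from rfl,
    dSum_blocksum]
  simp only [dSum_apply]
  rcases hi : finSumFinEquiv.symm i with a | a <;> rcases hj : finSumFinEquiv.symm j with b | b <;>
    simp [scalMul, Matrix.fromBlocks, hi, hj]

lemma mulScal_dSum {n m : ℕ} (T : Matrix (Fin n) (Fin n) R)
    (T' : Matrix (Fin m) (Fin m) R) (X : Matrix (Fin n) (Fin n) M)
    (X' : Matrix (Fin m) (Fin m) M) :
    mulScal (dSum X X') (dSum T T') = dSum (mulScal X T) (mulScal X' T') := by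
  ext i j
  rw [show (mulScal (dSum X X') (dSum T T')) i j = ∑ k, dSum T T' k j • dSum X X' i k from rfl,
    dSum_blocksum]
  simp only [dSum_apply]
  rcases hi : finSumFinEquiv.symm i with a | a <;> rcases hj : finSumFinEquiv.symm j with b | b <;>
    simp [mulScal, Matrix.fromBlocks, hi, hj]

lemma dSum_mul {n m : ℕ} (S T : Matrix (Fin n) (Fin n) R)
    (S' T' : Matrix (Fin m) (Fin m) R) :
    dSum S S' * dSum T T' = dSum (S * T) (S' * T') := by
  unfold dSum
  simp only [Matrix.reindex_apply]
  rw [Matrix.submatrix_mul_equiv, Matrix.fromBlocks_multiply]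
  simp

lemma dSum_one {n m : ℕ} :
    (1 : Matrix (Fin (n + m)) (Fin (n + m)) R) = dSum 1 1 := by
  unfold dSum
  simp [Matrix.fromBlocks_one]

variable {N : Type*} [AddCommGroup N] [Module R N]

/-- Well-definedness of the extension. -/
lemma key_wellDef {Ω : ∀ n : ℕ, Set (Matrix (Fin n) (Fin n) M)}
    {f : ∀ n : ℕ, Matrix (Fin n) (Fin n) M → Matrix (Fin n) (Fin n) N}
    (hsim : RespectsSim R Ω f) {n : ℕ}
    {X₁ X₂ : Matrix (Fin n) (Fin n) M} {S₁ T₁ S₂ T₂ : Matrix (Fin n) (Fin n) R}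
    (h1 : X₁ ∈ Ω n) (h2 : X₂ ∈ Ω n)
    (hST1 : S₁ * T₁ = 1) (hTS1 : T₁ * S₁ = 1)
    (hST2 : S₂ * T₂ = 1) (hTS2 : T₂ * S₂ = 1)
    (heq : scalMul S₁ (mulScal X₁ T₁) = scalMul S₂ (mulScal X₂ T₂)) :
    scalMul S₁ (mulScal (f n X₁) T₁) = scalMul S₂ (mulScal (f n X₂) T₂) := by
  have hX2 : scalMul (T₂ * S₁) (mulScal X₁ (T₁ * S₂)) = X₂ := by
    rw [← collapse, heq, collapse, hTS2]
    simp
  have hinv1 : (T₂ * S₁) * (T₁ * S₂) = 1 := by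
    rw [mul_assoc, ← mul_assoc S₁, hST1, one_mul, hTS2]
  have hinv2 : (T₁ * S₂) * (T₂ * S₁) = 1 := by
    rw [mul_assoc, ← mul_assoc S₂, hST2, one_mul, hTS1]
  have hmem : scalMul (T₂ * S₁) (mulScal X₁ (T₁ * S₂)) ∈ Ω n := hX2 ▸ h2
  have hf := hsim n X₁ (T₂ * S₁) (T₁ * S₂) h1 hinv1 hinv2 hmem
  rw [hX2] at hf
  rw [hf, collapse, ← mul_assoc S₂ T₂ S₁, mul_assoc T₁ S₂ T₂, hST2, one_mul, mul_one]

lemma mem_simEnv_self {Ω : ∀ n : ℕ, Set (Matrix (Fin n) (Fin n) M)}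
    {n : ℕ} {X : Matrix (Fin n) (Fin n) M} (hX : X ∈ Ω n) : X ∈ simEnv R Ω n :=
  ⟨X, 1, 1, hX, one_mul 1, one_mul 1, by simp⟩

open scoped Classical in
/-- The extension of `f` to the similarity envelope. -/
noncomputable def ftExt (Ω : ∀ n : ℕ, Set (Matrix (Fin n) (Fin n) M))
    (f : ∀ n : ℕ, Matrix (Fin n) (Fin n) M → Matrix (Fin n) (Fin n) N)
    (n : ℕ) (W : Matrix (Fin n) (Fin n) M) : Matrix (Fin n) (Fin n) N :=
  if h : W ∈ simEnv R Ω n then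
    scalMul h.choose_spec.choose
      (mulScal (f n h.choose) h.choose_spec.choose_spec.choose)
  else 0

lemma ftExt_spec {Ω : ∀ n : ℕ, Set (Matrix (Fin n) (Fin n) M)}
    {f : ∀ n : ℕ, Matrix (Fin n) (Fin n) M → Matrix (Fin n) (Fin n) N}
    (hsim : RespectsSim R Ω f) {n : ℕ}
    {X : Matrix (Fin n) (Fin n) M} {S T : Matrix (Fin n) (Fin n) R}
    (hX : X ∈ Ω n) (hST : S * T = 1) (hTS : T * S = 1) :
    ftExt (R := R) Ω f n (scalMul S (mulScal X T)) = scalMul S (mulScal (f n X) T) := by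
  have h : scalMul S (mulScal X T) ∈ simEnv R Ω n := ⟨X, S, T, hX, hST, hTS, rfl⟩
  unfold ftExt
  rw [dif_pos h]
  obtain ⟨hX₀, hST₀, hTS₀, heq₀⟩ := h.choose_spec.choose_spec.choose_spec
  exact key_wellDef hsim hX₀ hX hST₀ hTS₀ hST hTS heq₀.symm

end Aux

/-- Every nc function on a nc set `Ω` extends to a nc function on the
similarity invariant envelope `Ω̃`, given by `f̃(S X S⁻¹) = S f(X) S⁻¹`, and this extension
is unique among nc functions on `Ω̃` restricting to `f` on `Ω`. -/
theorem nc_function_extends_to_simEnv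
    {R : Type*} [CommRing R] {M : Type*} [AddCommGroup M] [Module R M]
    {N : Type*} [AddCommGroup N] [Module R N]
    (Ω : ∀ n : ℕ, Set (Matrix (Fin n) (Fin n) M))
    (f : ∀ n : ℕ, Matrix (Fin n) (Fin n) M → Matrix (Fin n) (Fin n) N)
    (hΩ : IsNCSet Ω) (hds : RespectsDirSums Ω f) (hsim : RespectsSim R Ω f) :
    ∃ ft : ∀ n : ℕ, Matrix (Fin n) (Fin n) M → Matrix (Fin n) (Fin n) N,
      RespectsDirSums (simEnv R Ω) ft ∧ RespectsSim R (simEnv R Ω) ft ∧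
      (∀ (n : ℕ) (X : Matrix (Fin n) (Fin n) M), X ∈ Ω n → ft n X = f n X) ∧
      (∀ (n : ℕ) (X : Matrix (Fin n) (Fin n) M) (S T : Matrix (Fin n) (Fin n) R),
        X ∈ Ω n → S * T = 1 → T * S = 1 →
        ft n (scalMul S (mulScal X T)) = scalMul S (mulScal (f n X) T)) ∧
      (∀ gt : ∀ n : ℕ, Matrix (Fin n) (Fin n) M → Matrix (Fin n) (Fin n) N,
        RespectsDirSums (simEnv R Ω) gt → RespectsSim R (simEnv R Ω) gt →
        (∀ (n : ℕ) (X : Matrix (Fin n) (Fin n) M), X ∈ Ω n → gt n X = f n X) →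
        ∀ (n : ℕ) (W : Matrix (Fin n) (Fin n) M), W ∈ simEnv R Ω n → gt n W = ft n W) := by

  refine ⟨ftExt (R := R) Ω f, ?_, ?_, ?_, ?_, ?_⟩
  · -- RespectsDirSums
    rintro n m W₁ W₂ ⟨X₁, S₁, T₁, hX₁, hST₁, hTS₁, rfl⟩ ⟨X₂, S₂, T₂, hX₂, hST₂, hTS₂, rfl⟩
    have hd : dSum (scalMul S₁ (mulScal X₁ T₁)) (scalMul S₂ (mulScal X₂ T₂))
        = scalMul (dSum S₁ S₂) (mulScal (dSum X₁ X₂) (dSum T₁ T₂)) := by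
      rw [mulScal_dSum, scalMul_dSum]
    rw [hd, ftExt_spec hsim (hΩ n m X₁ X₂ hX₁ hX₂)
        (by rw [dSum_mul, hST₁, hST₂]; exact dSum_one.symm)
        (by rw [dSum_mul, hTS₁, hTS₂]; exact dSum_one.symm),
      hds n m X₁ X₂ hX₁ hX₂, mulScal_dSum, scalMul_dSum,
      ftExt_spec hsim hX₁ hST₁ hTS₁, ftExt_spec hsim hX₂ hST₂ hTS₂]
  · -- RespectsSim
    rintro n W S T ⟨X, S₀, T₀, hX, hST₀, hTS₀, rfl⟩ hST hTS -
    rw [collapse, ftExt_spec hsim hX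
        (by rw [mul_assoc, ← mul_assoc S₀, hST₀, one_mul, hST])
        (by rw [mul_assoc, ← mul_assoc T, hTS, one_mul, hTS₀]),
      ← collapse, ftExt_spec hsim hX hST₀ hTS₀]
  · -- restriction
    intro n X hX
    have := ftExt_spec (Ω := Ω) (f := f) hsim hX (one_mul (1 : Matrix (Fin n) (Fin n) R))
      (one_mul 1)
    simpa using this
  · -- formula
    intro n X S T hX hST hTS
    exact ftExt_spec hsim hX hST hTS
  · -- uniqueness
    rintro gt - hgsim hgres n W hW
    obtain ⟨X, S, T, hX, hST, hTS, rfl⟩ := hW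
    rw [hgsim n X S T (mem_simEnv_self hX) hST hTS ⟨X, S, T, hX, hST, hTS, rfl⟩,
      hgres n X hX, ftExt_spec hsim hX hST hTS]
end
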